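/- Let B be a bounded selfadjoint operator on a complex Hilbert space H and S a closed subspace of H. Then the following are equivalent: (i) S is B-nonnegative (⟨Bs,s⟩ ≥ 0 for all s ∈ S) and B is S-weakly complementable; (ii) there exist selfadjoint B1, B2 ∈ L(H) with B2 positive, B = B1 + B2, and S ⊆ N(B1); (iii) the set M^−(B, S^⊥) is non-empty; (iv) the set M^−(B, S^⊥) has a maximum element in the Loewner order. Moreover, in this case max M^−(B, S^⊥) = B_{/S}. -/

import Mathlib

open ContinuousLinearMap

noncomputable section

variable {H : Type*} [NormedAddCommGroup H] [InnerProductSpace ℂ H] [CompleteSpace H]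

/-- The orthogonal projection onto a closed subspace `S`, as an endomorphism of `H`. -/
def projL (S : Submodule ℂ H) [S.HasOrthogonalProjection] : H →L[ℂ] H :=
  S.subtypeL.comp S.orthogonalProjectionOnto

/-- The corner `a = P_S B P_S` of the block decomposition of `B` w.r.t. `H = S ⊕ Sᗮ`. -/
def blockA (B : H →L[ℂ] H) (S : Submodule ℂ H) [S.HasOrthogonalProjection] : H →L[ℂ] H :=
  projL S * B * projL S

/-- The corner `b = P_S B P_{Sᗮ}` of the block decomposition of `B` w.r.t. `H = S ⊕ Sᗮ`. -/
def blockB (B : H →L[ℂ] H) (S : Submodule ℂ H) [S.HasOrthogonalProjection] : H →L[ℂ] H :=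
  projL S * B * (1 - projL S)

/-- The corner `c = P_{Sᗮ} B P_{Sᗮ}` of the block decomposition of `B` w.r.t. `H = S ⊕ Sᗮ`. -/
def blockC (B : H →L[ℂ] H) (S : Submodule ℂ H) [S.HasOrthogonalProjection] : H →L[ℂ] H :=
  (1 - projL S) * B * (1 - projL S)

/-- `m = |a|^{1/2}`: `m` is the (unique) positive fourth root of `a⋆ a`. -/
def IsSqrtAbs (a m : H →L[ℂ] H) : Prop :=
  m.IsPositive ∧ m ^ 4 = adjoint a * a

/-- `B` is `S`-weakly complementable: `range b ⊆ range |a|^{1/2}`. -/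
def IsWeaklyComplementable (B : H →L[ℂ] H) (S : Submodule ℂ H)
    [S.HasOrthogonalProjection] : Prop :=
  ∃ m : H →L[ℂ] H, IsSqrtAbs (blockA B S) m ∧
    LinearMap.range (blockB B S : H →ₗ[ℂ] H) ≤ LinearMap.range (m : H →ₗ[ℂ] H)

/-- `B` is `S`-complementable: `H = S + B⁻¹(Sᗮ)`. -/
def IsComplementable (B : H →L[ℂ] H) (S : Submodule ℂ H) : Prop :=
  S ⊔ Sᗮ.comap (B : H →ₗ[ℂ] H) = ⊤

/-- The set `P(B,S)` of `B`-selfadjoint bounded idempotents onto `S`. -/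
def projSet (B : H →L[ℂ] H) (S : Submodule ℂ H) : Set (H →L[ℂ] H) :=
  {Q | Q * Q = Q ∧ LinearMap.range (Q : H →ₗ[ℂ] H) = S ∧ B * Q = adjoint Q * B}

/-- `Y` is the Schur complement `B_{/S} = [[0,0],[0, c - f⋆ u f]]`, where `f` is the reduced
solution of `b = |a|^{1/2} x` and `a = u |a|` is the polar decomposition of `a`. -/
def IsSchur (B : H →L[ℂ] H) (S : Submodule ℂ H) [S.HasOrthogonalProjection]
    (Y : H →L[ℂ] H) : Prop :=
  ∃ m u f : H →L[ℂ] H,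
    IsSqrtAbs (blockA B S) m ∧
    LinearMap.ker (u : H →ₗ[ℂ] H) = LinearMap.ker (blockA B S : H →ₗ[ℂ] H) ∧
    (∀ x ∈ (LinearMap.ker (blockA B S : H →ₗ[ℂ] H))ᗮ, ‖u x‖ = ‖x‖) ∧
    blockA B S = u * m ^ 2 ∧
    m * f = blockB B S ∧
    LinearMap.range (f : H →ₗ[ℂ] H) ≤ (LinearMap.range (m : H →ₗ[ℂ] H)).topologicalClosure ∧
    Y = blockC B S - adjoint f * (u * f)

/-- The set `M⁻(B,T)`. -/
def Mminus (B : H →L[ℂ] H) (T : Submodule ℂ H) : Set (H →L[ℂ] H) :=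
  {X | IsSelfAdjoint X ∧ (B - X).IsPositive ∧ LinearMap.range (X : H →ₗ[ℂ] H) ≤ T}

/-- The set `M⁺(B,T)`. -/
def Mplus (B : H →L[ℂ] H) (T : Submodule ℂ H) : Set (H →L[ℂ] H) :=
  {X | IsSelfAdjoint X ∧ (X - B).IsPositive ∧ LinearMap.range (X : H →ₗ[ℂ] H) ≤ T}

/-- `Y` is the Loewner maximum of `M`. -/
def IsMaxOf (M : Set (H →L[ℂ] H)) (Y : H →L[ℂ] H) : Prop :=
  Y ∈ M ∧ ∀ X ∈ M, (Y - X).IsPositive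

/-- `Z` is the Loewner minimum of `M`. -/
def IsMinOf (M : Set (H →L[ℂ] H)) (Z : H →L[ℂ] H) : Prop :=
  Z ∈ M ∧ ∀ X ∈ M, (X - Z).IsPositive

/-- `Z` is the greatest lower bound of `M` in the Loewner order on selfadjoint operators. -/
def IsGLBOf (M : Set (H →L[ℂ] H)) (Z : H →L[ℂ] H) : Prop :=
  IsSelfAdjoint Z ∧ (∀ X ∈ M, (X - Z).IsPositive) ∧
    ∀ F : H →L[ℂ] H, IsSelfAdjoint F → (∀ X ∈ M, (X - F).IsPositive) → (Z - F).IsPositive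

/-- `Y` is the least upper bound of `M` in the Loewner order on selfadjoint operators. -/
def IsLUBOf (M : Set (H →L[ℂ] H)) (Y : H →L[ℂ] H) : Prop :=
  IsSelfAdjoint Y ∧ (∀ X ∈ M, (Y - X).IsPositive) ∧
    ∀ F : H →L[ℂ] H, IsSelfAdjoint F → (∀ X ∈ M, (F - X).IsPositive) → (F - Y).IsPositive

/-- A decomposition `S = S₊ ⊕_B S₋` into a `B`-nonnegative and a `B`-nonpositive part. -/
def IsWDecomp (B : H →L[ℂ] H) (S Sp Sm : Submodule ℂ H) : Prop :=
  (∀ x ∈ Sp, ∀ y ∈ Sm, (inner ℂ x y : ℂ) = 0) ∧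
  Sp ⊔ Sm = S ∧
  (∀ x ∈ Sp, 0 ≤ (inner ℂ (B x) x : ℂ).re) ∧
  (∀ x ∈ Sm, (inner ℂ (B x) x : ℂ).re ≤ 0) ∧
  (∀ x ∈ Sp, ∀ y ∈ Sm, (inner ℂ (B x) y : ℂ) = 0)

/-- `Y` is Krein's shorted operator `B_{/T}` of the positive operator `B` to `T`:
the Loewner maximum of `{X : 0 ≤ X ≤ B, range X ⊆ Tᗮ}`. -/
def IsShort (B : H →L[ℂ] H) (T : Submodule ℂ H) (Y : H →L[ℂ] H) : Prop :=
  (Y.IsPositive ∧ (B - Y).IsPositive ∧ LinearMap.range (Y : H →ₗ[ℂ] H) ≤ Tᗮ) ∧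
    ∀ X : H →L[ℂ] H, X.IsPositive → (B - X).IsPositive → LinearMap.range (X : H →ₗ[ℂ] H) ≤ Tᗮ →
      (Y - X).IsPositive

/-- The set `{R⋆ Q⋆ B Q R : Q² = Q, N(Q) = T}`. -/
def comprSet2 (B R : H →L[ℂ] H) (T : Submodule ℂ H) : Set (H →L[ℂ] H) :=
  {X | ∃ Q : H →L[ℂ] H, Q * Q = Q ∧ LinearMap.ker (Q : H →ₗ[ℂ] H) = T ∧
    X = adjoint R * (adjoint Q * B * Q) * R}

/-- The set `{Q⋆ B Q : Q² = Q, N(Q) = S}`. -/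
def comprSet1 (B : H →L[ℂ] H) (S : Submodule ℂ H) : Set (H →L[ℂ] H) :=
  {X | ∃ Q : H →L[ℂ] H, Q * Q = Q ∧ LinearMap.ker (Q : H →ₗ[ℂ] H) = S ∧ X = adjoint Q * B * Q}

/-- The set `N⁻(W,T)` of the Krein space `(H, [x,y] = ⟨Jx,y⟩)`. -/
def Nminus (J W : H →L[ℂ] H) (T : Submodule ℂ H) : Set (H →L[ℂ] H) :=
  {X | IsSelfAdjoint (J * X) ∧ (J * (W - X)).IsPositive ∧ LinearMap.range (X : H →ₗ[ℂ] H) ≤ T}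

/-- The set `N⁺(W,T)` of the Krein space `(H, [x,y] = ⟨Jx,y⟩)`. -/
def Nplus (J W : H →L[ℂ] H) (T : Submodule ℂ H) : Set (H →L[ℂ] H) :=
  {X | IsSelfAdjoint (J * X) ∧ (J * (X - W)).IsPositive ∧ LinearMap.range (X : H →ₗ[ℂ] H) ≤ T}

/-- `Y` is the maximum of `M` in the Krein order induced by `J`. -/
def KMaxOf (J : H →L[ℂ] H) (M : Set (H →L[ℂ] H)) (Y : H →L[ℂ] H) : Prop :=
  Y ∈ M ∧ ∀ X ∈ M, (J * (Y - X)).IsPositive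

/-- `Z` is the minimum of `M` in the Krein order induced by `J`. -/
def KMinOf (J : H →L[ℂ] H) (M : Set (H →L[ℂ] H)) (Z : H →L[ℂ] H) : Prop :=
  Z ∈ M ∧ ∀ X ∈ M, (J * (X - Z)).IsPositive

/-- `E` is a densely defined projection (idempotent) with kernel `N`. -/
def IsDDProj (N : Submodule ℂ H) (E : H →ₗ.[ℂ] H) : Prop :=
  Dense (E.domain : Set H) ∧
  (∃ h : ∀ x : E.domain, E x ∈ E.domain, ∀ x : E.domain, E ⟨E x, h x⟩ = E x) ∧
  (LinearMap.ker E.toFun).map E.domain.subtype = N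

/-- `G` is the (everywhere defined, bounded) composition `E ∘ T`; in particular
`range T ⊆ dom E`. -/
def IsBddComp (E : H →ₗ.[ℂ] H) (T G : H →L[ℂ] H) : Prop :=
  ∃ h : ∀ x : H, T x ∈ E.domain, ∀ x : H, G x = E ⟨T x, h x⟩


/-!
Write `B = [[a, b], [b⋆, c]]` with respect to `H = S ⊕ Sᗮ`, and let `P`, `Q` be the projections
onto `S`, `Sᗮ`. An operator `X ∈ M⁻(B, Sᗮ)` lives in the `c`-corner, so `D = B - X ≥ 0` has the
same corners `a` and `b`. Writing `D = r²`, we get `a = (P r)(P r)⋆` and `b = (P r)(r Q)`, so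
Douglas' lemma factors `b` through `a^{1/2}` with the bound `‖f v‖² ≤ ⟪D Q v, Q v⟫` for the reduced
solution `f` of `a^{1/2} f = b`. This gives weak complementability and also `X ≤ c - f⋆ f`.
Conversely, if `a ≥ 0` and `a^{1/2} f = b`, then `B - (c - f⋆ f) = (a^{1/2} + f)⋆ (a^{1/2} + f)`,
so `c - f⋆ f` is the maximum of `M⁻(B, Sᗮ)`. Since `a ≥ 0`, the partial isometry in `a = u |a|` is
the projection onto `N(a)ᗮ`, which fixes the range of `f`, so `c - f⋆ f = c - f⋆ u f` is the Schur
complement.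
-/

open scoped InnerProductSpace

section Hilbert

variable {𝕜 E F G : Type*} [RCLike 𝕜] [NormedAddCommGroup E] [InnerProductSpace 𝕜 E]

theorem eq_of_mem_orthogonal_ker_of_apply_eq [AddCommGroup G] [Module 𝕜 G] {T : E →ₗ[𝕜] G}
    {x y : E} (hx : x ∈ T.kerᗮ) (hy : y ∈ T.kerᗮ) (h : T x = T y) : x = y := by
  have hxy : x - y ∈ T.ker ⊓ T.kerᗮ :=
    Submodule.mem_inf.mpr ⟨by rw [LinearMap.mem_ker, map_sub, h, sub_self], sub_mem hx hy⟩
  rwa [Submodule.inf_orthogonal_eq_bot, Submodule.mem_bot, sub_eq_zero] at hxy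

theorem Submodule.starProjection_mul_eq_zero {K : Submodule 𝕜 E} [K.HasOrthogonalProjection]
    {X : E →L[𝕜] E} (hX : X.range ≤ Kᗮ) : K.starProjection * X = 0 :=
  ContinuousLinearMap.ext fun x =>
    (K.starProjection_apply_eq_zero_iff).mpr (hX (LinearMap.mem_range_self _ x))

variable [CompleteSpace E]

theorem apply_starProjection_orthogonal_ker [NormedAddCommGroup F] [NormedSpace 𝕜 F]
    (T : E →L[𝕜] F) (x : E) : T (T.kerᗮ.starProjection x) = T x := by
  have hx := Submodule.sub_starProjection_mem_orthogonal (K := T.kerᗮ) x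
  rw [Submodule.orthogonal_orthogonal] at hx
  rwa [LinearMap.mem_ker, map_sub, sub_eq_zero, eq_comm] at hx

theorem IsSelfAdjoint.orthogonal_ker {A : E →L[𝕜] E} (hA : IsSelfAdjoint A) :
    A.kerᗮ = A.range.topologicalClosure := by
  rw [ContinuousLinearMap.orthogonal_ker, hA.adjoint_eq]

theorem IsSelfAdjoint.ker_mul_self {A : E →L[𝕜] E} (hA : IsSelfAdjoint A) :
    (A * A).ker = A.ker := by
  have h := A.ker_adjoint_comp_self
  rwa [hA.adjoint_eq] at h

theorem IsSelfAdjoint.range_le_orthogonal_iff {A : E →L[𝕜] E} (hA : IsSelfAdjoint A)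
    (S : Submodule 𝕜 E) : A.range ≤ Sᗮ ↔ S ≤ A.ker := by
  rw [← hA.adjoint_eq, ← ContinuousLinearMap.orthogonal_range, hA.adjoint_eq]
  exact Submodule.isOrtho_comm

/-- Douglas' factorization lemma, pointwise. -/
theorem IsSelfAdjoint.exists_apply_eq_norm_le [NormedAddCommGroup F] [InnerProductSpace 𝕜 F]
    [CompleteSpace F] {A : E →L[𝕜] E} (hA : IsSelfAdjoint A) {T : F →L[𝕜] E}
    (h : A * A = T ∘L adjoint T) (v : F) : ∃ z ∈ A.kerᗮ, A z = T v ∧ ‖z‖ ≤ ‖v‖ := by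
  have hnorm : ∀ x, ‖adjoint T x‖ = ‖A x‖ := fun x => by
    rw [← sq_eq_sq₀ (norm_nonneg _) (norm_nonneg _), apply_norm_sq_eq_inner_adjoint_left,
      apply_norm_sq_eq_inner_adjoint_left, adjoint_adjoint, hA.adjoint_eq, ← h]
    rfl
  have hker : A.ker ≤ (innerₛₗ 𝕜 (T v)).ker := fun x hx => by
    have hAx : A x = 0 := hx
    have hTx : adjoint T x = 0 := norm_eq_zero.mp (by rw [hnorm, hAx, norm_zero])
    simp [← adjoint_inner_right, hTx]
  -- `A x ↦ ⟪T v, x⟫` is a functional on `range A` of norm at most `‖v‖`; `z` represents a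
  -- norm-preserving extension of it.
  let φ : A.range →ₗ[𝕜] 𝕜 :=
    A.ker.liftQ (innerₛₗ 𝕜 (T v)) hker ∘ₗ (A : E →ₗ[𝕜] E).quotKerEquivRange.symm.toLinearMap
  have hφ : ∀ x hx, φ ⟨(A : E →ₗ[𝕜] E) x, hx⟩ = ⟪T v, x⟫_𝕜 := fun x hx => by
    simp only [φ, LinearMap.comp_apply, LinearEquiv.coe_coe]
    rw [LinearMap.quotKerEquivRange_symm_apply_image]
    rfl
  have hφ_le : ∀ w, ‖φ w‖ ≤ ‖v‖ * ‖w‖ := by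
    intro w
    obtain ⟨x, hx⟩ := LinearMap.mem_range.mp w.2
    rw [show w = ⟨_, LinearMap.mem_range_self _ x⟩ from Subtype.ext hx.symm, hφ,
      ← adjoint_inner_right]
    exact (norm_inner_le_norm _ _).trans_eq (by rw [hnorm]; rfl)
  obtain ⟨g, hg, hg_norm⟩ := exists_extension_norm_eq _ (φ.mkContinuous ‖v‖ hφ_le)
  set z := (InnerProductSpace.toDual 𝕜 E).symm g
  have hz : A z = T v := ext_inner_right 𝕜 fun x => by
    rw [← hA.adjoint_eq, adjoint_inner_left, InnerProductSpace.toDual_symm_apply]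
    exact (hg ⟨_, LinearMap.mem_range_self _ x⟩).trans (hφ x _)
  have hz_le : ‖z‖ ≤ ‖v‖ := by
    rw [LinearIsometryEquiv.norm_map, hg_norm]
    exact LinearMap.mkContinuous_norm_le _ (norm_nonneg v) _
  exact ⟨A.kerᗮ.starProjection z, A.kerᗮ.starProjection_apply_mem z,
    (apply_starProjection_orthogonal_ker A z).trans hz,
    (A.kerᗮ.norm_starProjection_apply_le z).trans hz_le⟩

theorem exists_comp_eq_of_range_le [NormedAddCommGroup F] [NormedSpace 𝕜 F]
    [NormedAddCommGroup G] [NormedSpace 𝕜 G] [CompleteSpace G]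
    (m : E →L[𝕜] F) (b : G →L[𝕜] F) (h : b.range ≤ m.range) :
    ∃ f : G →L[𝕜] E, m ∘L f = b ∧ f.range ≤ m.kerᗮ := by
  choose pre hpre using fun x => h (LinearMap.mem_range_self _ x)
  set K := m.kerᗮ
  let sol : G → E := fun x => K.starProjection (pre x)
  have hsol_mem : ∀ x, sol x ∈ K := fun x => K.starProjection_apply_mem _
  have hsol : ∀ x, m (sol x) = b x := fun x =>
    (apply_starProjection_orthogonal_ker m _).trans (hpre x)
  have uniq : ∀ {x y}, x ∈ K → y ∈ K → m x = m y → x = y := fun hx hy h =>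
    eq_of_mem_orthogonal_ker_of_apply_eq hx hy h
  let f : G →ₗ[𝕜] E :=
    { toFun := sol
      map_add' := fun x y =>
        uniq (hsol_mem _) (add_mem (hsol_mem x) (hsol_mem y)) (by simp [hsol])
      map_smul' := fun c x =>
        uniq (hsol_mem _) (K.smul_mem c (hsol_mem x)) (by simp [hsol]) }
  have hf : Continuous f := f.continuous_of_seq_closed_graph fun u x y hu hfu => by
    have hy : y ∈ K :=
      m.ker.isClosed_orthogonal.mem_of_tendsto hfu (.of_forall fun n => hsol_mem _)
    refine uniq hy (hsol_mem x) (tendsto_nhds_unique ((m.continuous.tendsto y).comp hfu) ?_)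
    have hmf : m ∘ (f ∘ u) = b ∘ u := funext fun n => hsol (u n)
    rw [hmf]
    exact (hsol x).symm ▸ (b.continuous.tendsto x).comp hu
  exact ⟨⟨f, hf⟩, ContinuousLinearMap.ext hsol, by rintro _ ⟨x, rfl⟩; exact hsol_mem x⟩

end Hilbert

theorem IsSqrtAbs.mul_self_eq {a m : H →L[ℂ] H} (ha : 0 ≤ a) (h : IsSqrtAbs a m) : m * m = a := by
  have hmm : 0 ≤ m * m := by
    simpa [h.1.isSelfAdjoint.star_eq] using star_mul_self_nonneg m
  have h4 : (m * m) * (m * m) = a * a :=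
    calc (m * m) * (m * m) = m ^ 4 := by noncomm_ring
      _ = a * a := by rw [h.2, (IsSelfAdjoint.of_nonneg ha).adjoint_eq]
  rw [← CFC.sqrt_unique h4 hmm, CFC.sqrt_mul_self a ha]

theorem isSqrtAbs_sqrt {a : H →L[ℂ] H} (ha : 0 ≤ a) : IsSqrtAbs a (CFC.sqrt a) := by
  refine ⟨(nonneg_iff_isPositive _).mp (CFC.sqrt_nonneg a), ?_⟩
  calc CFC.sqrt a ^ 4 = (CFC.sqrt a * CFC.sqrt a) * (CFC.sqrt a * CFC.sqrt a) := by noncomm_ring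
    _ = adjoint a * a := by
      rw [CFC.sqrt_mul_sqrt_self a ha, (IsSelfAdjoint.of_nonneg ha).adjoint_eq]

section Blocks

variable {S : Submodule ℂ H} [S.HasOrthogonalProjection]

theorem isSelfAdjoint_projL : IsSelfAdjoint (projL S) := isSelfAdjoint_starProjection S

theorem isSelfAdjoint_one_sub_projL : IsSelfAdjoint (1 - projL S) :=
  (IsSelfAdjoint.one _).sub isSelfAdjoint_projL

theorem mul_projL_eq_zero {X : H →L[ℂ] H} (hXsa : IsSelfAdjoint X) (hX : X.range ≤ Sᗮ) :
    X * projL S = 0 := by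
  have h := congrArg star (Submodule.starProjection_mul_eq_zero hX)
  rwa [star_mul, hXsa.star_eq, (isSelfAdjoint_starProjection S).star_eq, star_zero] at h

theorem blocks_sub_of_range_le (B : H →L[ℂ] H) {X : H →L[ℂ] H} (hXsa : IsSelfAdjoint X)
    (hX : X.range ≤ Sᗮ) : blockA (B - X) S = blockA B S ∧ blockB (B - X) S = blockB B S ∧
      blockC (B - X) S = blockC B S - X := by
  have hPX : projL S * X = 0 := Submodule.starProjection_mul_eq_zero hX
  have hXP : X * projL S = 0 := mul_projL_eq_zero hXsa hX
  refine ⟨?_, ?_, ?_⟩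
  · rw [blockA, blockA, mul_sub (projL S), sub_mul _ _ (projL S), hPX, zero_mul, sub_zero]
  · rw [blockB, blockB, mul_sub (projL S), sub_mul _ _ (1 - projL S), hPX, zero_mul, sub_zero]
  · have hQXQ : (1 - projL S) * X * (1 - projL S) = X := by
      rw [sub_mul, one_mul, hPX, sub_zero, mul_sub, mul_one, hXP, sub_zero]
    rw [blockC, blockC, mul_sub (1 - projL S), sub_mul _ _ (1 - projL S), hQXQ]

theorem inner_blockC_apply (B : H →L[ℂ] H) (v : H) :
    ⟪blockC B S v, v⟫_ℂ = ⟪B ((1 - projL S) v), (1 - projL S) v⟫_ℂ :=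
  isSelfAdjoint_one_sub_projL.isSymmetric _ _

theorem isSelfAdjoint_blockC {B : H →L[ℂ] H} (hB : IsSelfAdjoint B) :
    IsSelfAdjoint (blockC B S) := by
  rw [IsSelfAdjoint, blockC, star_mul, star_mul, hB.star_eq, isSelfAdjoint_one_sub_projL.star_eq,
    mul_assoc]

theorem blockA_nonneg {B : H →L[ℂ] H} (hB : IsSelfAdjoint B)
    (hpos : ∀ s ∈ S, 0 ≤ (⟪B s, s⟫_ℂ).re) : 0 ≤ blockA B S := by
  rw [nonneg_iff_isPositive, isPositive_def']
  refine ⟨?_, fun x => ?_⟩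
  · rw [IsSelfAdjoint, blockA, star_mul, star_mul, hB.star_eq, isSelfAdjoint_projL.star_eq,
      mul_assoc]
  · have h : ⟪blockA B S x, x⟫_ℂ = ⟪B (projL S x), projL S x⟫_ℂ :=
      isSelfAdjoint_projL.isSymmetric _ _
    rw [reApplyInnerSelf, h]
    exact hpos _ (S.starProjection_apply_mem x)

theorem blockA_add_blockB_add_adjoint_blockB_add_blockC {B : H →L[ℂ] H} (hB : IsSelfAdjoint B) :
    blockA B S + blockB B S + adjoint (blockB B S) + blockC B S = B := by
  rw [← star_eq_adjoint, blockA, blockB, blockC, star_mul, star_mul, hB.star_eq,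
    isSelfAdjoint_projL.star_eq, isSelfAdjoint_one_sub_projL.star_eq]
  noncomm_ring

theorem exists_apply_eq_blockB_apply {D m : H →L[ℂ] H} (hD : 0 ≤ D) (hm : IsSelfAdjoint m)
    (h : m * m = blockA D S) (v : H) :
    ∃ z ∈ m.kerᗮ, m z = blockB D S v ∧ ‖z‖ ^ 2 ≤ (⟪blockC D S v, v⟫_ℂ).re := by
  set r := CFC.sqrt D
  have hr : IsSelfAdjoint r := IsSelfAdjoint.of_nonneg (CFC.sqrt_nonneg D)
  have hrr : r * r = D := CFC.sqrt_mul_sqrt_self D hD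
  have hT : m * m = (projL S * r) ∘L adjoint (projL S * r) := by
    rw [h, blockA, ← hrr, ← star_eq_adjoint, star_mul, hr.star_eq, isSelfAdjoint_projL.star_eq]
    noncomm_ring
  obtain ⟨z, hzK, hz, hz_le⟩ := hm.exists_apply_eq_norm_le hT (r ((1 - projL S) v))
  refine ⟨z, hzK, by rw [hz, blockB, ← hrr]; rfl, ?_⟩
  calc ‖z‖ ^ 2 ≤ ‖r ((1 - projL S) v)‖ ^ 2 := by gcongr
    _ = (⟪blockC D S v, v⟫_ℂ).re := by
      rw [inner_blockC_apply, apply_norm_sq_eq_inner_adjoint_left, hr.adjoint_eq, ← hrr]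
      rfl

end Blocks

section Schur

variable {S : Submodule ℂ H}

theorem mminus_orthogonal_nonempty_iff {B : H →L[ℂ] H} :
    (Mminus B Sᗮ).Nonempty ↔ ∃ B1 B2 : H →L[ℂ] H, IsSelfAdjoint B1 ∧ IsSelfAdjoint B2 ∧
      B2.IsPositive ∧ B = B1 + B2 ∧ S ≤ B1.ker := by
  constructor
  · rintro ⟨X, hXsa, hD, hX⟩
    exact ⟨X, B - X, hXsa, hD.isSelfAdjoint, hD, (add_sub_cancel X B).symm,
      (hXsa.range_le_orthogonal_iff S).mp hX⟩
  · rintro ⟨B1, B2, h1, -, h2, rfl, hker⟩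
    exact ⟨B1, h1, by rwa [add_sub_cancel_left], (h1.range_le_orthogonal_iff S).mpr hker⟩

variable [S.HasOrthogonalProjection]

theorem nonneg_and_isWeaklyComplementable_of_mem_mminus {B X : H →L[ℂ] H}
    (hX : X ∈ Mminus B Sᗮ) :
    (∀ s ∈ S, 0 ≤ (⟪B s, s⟫_ℂ).re) ∧ IsWeaklyComplementable B S := by
  obtain ⟨hXsa, hD, hXr⟩ := hX
  have hB : IsSelfAdjoint B := by simpa using hD.isSelfAdjoint.add hXsa
  have hpos : ∀ s ∈ S, 0 ≤ (⟪B s, s⟫_ℂ).re := fun s hs => by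
    have hXs : X s = 0 := (hXsa.range_le_orthogonal_iff S).mp hXr hs
    simpa [hXs] using hD.re_inner_nonneg_left s
  obtain ⟨hA, hB', -⟩ := blocks_sub_of_range_le B hXsa hXr
  have ha := blockA_nonneg hB hpos
  refine ⟨hpos, CFC.sqrt (blockA B S), isSqrtAbs_sqrt ha, ?_⟩
  rintro _ ⟨v, rfl⟩
  obtain ⟨z, -, hz, -⟩ := exists_apply_eq_blockB_apply ((nonneg_iff_isPositive _).mpr hD)
    (IsSelfAdjoint.of_nonneg (CFC.sqrt_nonneg _)) (by rw [hA, CFC.sqrt_mul_sqrt_self _ ha]) v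
  exact ⟨z, hz.trans (by rw [hB']; rfl)⟩

theorem blockC_sub_adjoint_mul_self_mem_mminus {B m f : H →L[ℂ] H} (hB : IsSelfAdjoint B)
    (hm : IsSelfAdjoint m) (hmm : m * m = blockA B S) (hmf : m * f = blockB B S)
    (hf : f.range ≤ m.kerᗮ) : blockC B S - adjoint f * f ∈ Mminus B Sᗮ := by
  have hYsa : IsSelfAdjoint (blockC B S - adjoint f * f) :=
    (isSelfAdjoint_blockC hB).sub (IsSelfAdjoint.star_mul_self f)
  have hBY : B - (blockC B S - adjoint f * f) = adjoint (m + f) * (m + f) := by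
    have hb : adjoint (blockB B S) = adjoint f * m := by
      rw [← hmf, ← star_eq_adjoint, star_mul, hm.star_eq]; rfl
    nth_rw 1 [← blockA_add_blockB_add_adjoint_blockB_add_blockC hB (S := S)]
    rw [hb, ← hmm, ← hmf, map_add, hm.adjoint_eq]
    noncomm_ring
  refine ⟨hYsa, hBY ▸ isPositive_adjoint_comp_self (m + f),
    (hYsa.range_le_orthogonal_iff S).mpr fun s hs => ?_⟩
  have hQs : (1 - projL S) s = 0 :=
    sub_eq_zero.mpr (Submodule.starProjection_eq_self_iff.mpr hs).symm
  have hfs : f s = 0 := eq_of_mem_orthogonal_ker_of_apply_eq (hf ⟨s, rfl⟩) (zero_mem _) (by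
    show (m * f) s = m 0
    simp [hmf, blockB, hQs])
  show (1 - projL S) (B ((1 - projL S) s)) - adjoint f (f s) = 0
  rw [hQs, hfs, map_zero, map_zero, map_zero, sub_zero]

theorem le_blockC_sub_adjoint_mul_self_of_mem_mminus {B m f X : H →L[ℂ] H}
    (hm : IsSelfAdjoint m) (hmm : m * m = blockA B S) (hmf : m * f = blockB B S)
    (hf : f.range ≤ m.kerᗮ) (hX : X ∈ Mminus B Sᗮ) : X ≤ blockC B S - adjoint f * f := by
  obtain ⟨hXsa, hD, hXr⟩ := hX
  obtain ⟨hA, hB', hC⟩ := blocks_sub_of_range_le B hXsa hXr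
  have hYX : blockC B S - adjoint f * f - X = blockC (B - X) S - adjoint f * f := by
    rw [hC]; abel
  rw [le_def, hYX, isPositive_def']
  refine ⟨(isSelfAdjoint_blockC hD.isSelfAdjoint).sub (IsSelfAdjoint.star_mul_self f), fun v => ?_⟩
  obtain ⟨z, hzK, hz, hz_le⟩ :=
    exists_apply_eq_blockB_apply ((nonneg_iff_isPositive _).mpr hD) hm (hmm.trans hA.symm) v
  have hzf : z = f v := eq_of_mem_orthogonal_ker_of_apply_eq hzK (hf ⟨v, rfl⟩) (by
    show m z = m (f v)
    rw [hz, hB', ← hmf]; rfl)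
  have hff : ⟪(adjoint f * f) v, v⟫_ℂ = ⟪f v, f v⟫_ℂ := adjoint_inner_left f v (f v)
  rw [reApplyInnerSelf, sub_apply, inner_sub_left, map_sub, hff, inner_self_eq_norm_sq, ← hzf,
    RCLike.re_to_complex]
  linarith

theorem isSchur_of_mul_eq_blockB {B m f : H →L[ℂ] H} (ha : 0 ≤ blockA B S)
    (hm : IsSqrtAbs (blockA B S) m) (hmf : m * f = blockB B S) (hf : f.range ≤ m.kerᗮ) :
    IsSchur B S (blockC B S - adjoint f * f) := by
  have hasa := IsSelfAdjoint.of_nonneg ha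
  have hmsa : IsSelfAdjoint m := hm.1.isSelfAdjoint
  have hmm : m * m = blockA B S := hm.mul_self_eq ha
  have hker : m.ker = (blockA B S).ker := by rw [← hmm, hmsa.ker_mul_self]
  have hu : ∀ x ∈ (blockA B S).kerᗮ, (blockA B S).kerᗮ.starProjection x = x := fun x hx =>
    Submodule.starProjection_eq_self_iff.mpr hx
  refine ⟨m, (blockA B S).kerᗮ.starProjection, f, hm, ?_, fun x hx => by rw [hu x hx], ?_, hmf,
    ?_, ?_⟩
  · rw [Submodule.ker_starProjection, Submodule.orthogonal_orthogonal]
  · ext x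
    rw [pow_two, hmm]
    refine (hu _ ?_).symm
    rw [hasa.orthogonal_ker]
    exact Submodule.le_topologicalClosure _ (LinearMap.mem_range_self _ x)
  · rw [← hmsa.orthogonal_ker]
    exact hf
  · congr 2
    ext x
    exact (hu _ (hker ▸ hf (LinearMap.mem_range_self _ x))).symm

theorem exists_isMaxOf_mminus_and_isSchur {B : H →L[ℂ] H} (hB : IsSelfAdjoint B)
    (hpos : ∀ s ∈ S, 0 ≤ (⟪B s, s⟫_ℂ).re) (hwc : IsWeaklyComplementable B S) :
    ∃ Y, IsMaxOf (Mminus B Sᗮ) Y ∧ IsSchur B S Y := by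
  obtain ⟨m, hm, hrange⟩ := hwc
  have ha := blockA_nonneg hB hpos
  obtain ⟨f, hmf, hf⟩ := exists_comp_eq_of_range_le m (blockB B S) hrange
  have hmm := hm.mul_self_eq ha
  refine ⟨_, ⟨blockC_sub_adjoint_mul_self_mem_mminus hB hm.1.isSelfAdjoint hmm hmf hf,
    fun X hX => le_blockC_sub_adjoint_mul_self_of_mem_mminus hm.1.isSelfAdjoint hmm hmf hf hX⟩,
    isSchur_of_mul_eq_blockB ha hm hmf hf⟩

end Schur

/-- Characterization of weak complementability for a `B`-nonnegative subspace `S`; in that case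
the Loewner maximum of `M⁻(B,Sᗮ)` is the Schur complement `B_{/S}`. -/
theorem stmt_2 (B : H →L[ℂ] H) (hB : IsSelfAdjoint B)
    (S : Submodule ℂ H) [CompleteSpace S] :
    (((∀ s ∈ S, 0 ≤ (inner ℂ (B s) s : ℂ).re) ∧ IsWeaklyComplementable B S) ↔
      ∃ B1 B2 : H →L[ℂ] H, IsSelfAdjoint B1 ∧ IsSelfAdjoint B2 ∧ B2.IsPositive ∧
        B = B1 + B2 ∧ S ≤ LinearMap.ker (B1 : H →ₗ[ℂ] H)) ∧
    (((∀ s ∈ S, 0 ≤ (inner ℂ (B s) s : ℂ).re) ∧ IsWeaklyComplementable B S) ↔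
      (Mminus B Sᗮ).Nonempty) ∧
    (((∀ s ∈ S, 0 ≤ (inner ℂ (B s) s : ℂ).re) ∧ IsWeaklyComplementable B S) ↔
      ∃ Y, IsMaxOf (Mminus B Sᗮ) Y) ∧
    (∀ Y, IsMaxOf (Mminus B Sᗮ) Y → IsSchur B S Y) := by
  have of_nonempty : (Mminus B Sᗮ).Nonempty →
      (∀ s ∈ S, 0 ≤ (inner ℂ (B s) s : ℂ).re) ∧ IsWeaklyComplementable B S :=
    fun ⟨_, hX⟩ => nonneg_and_isWeaklyComplementable_of_mem_mminus hX
  have to_max : (∀ s ∈ S, 0 ≤ (inner ℂ (B s) s : ℂ).re) ∧ IsWeaklyComplementable B S →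
      ∃ Y, IsMaxOf (Mminus B Sᗮ) Y ∧ IsSchur B S Y :=
    fun h => exists_isMaxOf_mminus_and_isSchur hB h.1 h.2
  have iff_nonempty : _ ↔ (Mminus B Sᗮ).Nonempty :=
    ⟨fun h => (to_max h).imp fun _ hY => hY.1.1, of_nonempty⟩
  have iff_max : _ ↔ ∃ Y, IsMaxOf (Mminus B Sᗮ) Y :=
    ⟨fun h => (to_max h).imp fun _ hY => hY.1, fun ⟨Y, hY⟩ => of_nonempty ⟨Y, hY.1⟩⟩
  refine ⟨iff_nonempty.trans mminus_orthogonal_nonempty_iff, iff_nonempty, iff_max, fun Y hY => ?_⟩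
  obtain ⟨Y₀, hY₀, hSchur⟩ := to_max (of_nonempty ⟨Y, hY.1⟩)
  have hY_eq : Y = Y₀ := le_antisymm (hY₀.2 Y hY.1) (hY.2 Y₀ hY₀.1)
  rwa [hY_eq]
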